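/- Let (W, r_1, …, r_n) be a Strip Packing instance whose rectangles are listed in the FQW-ordering with Q ≠ ∅, and consider its BL packing. Then for every rectangle r ∈ Q it holds that h_r ≤ h_{r_B}. -/

import Mathlib

open scoped Classical
open MeasureTheory

/-- An axis-parallel rectangle, given by its width and its height. -/
structure Rect where
  w : ℝ
  h : ℝ

/-- A Strip Packing instance: a strip of width `W > 0` and `n` rectangles
`r 0, …, r (n-1)`, each with positive height and width at most `W`. -/
structure SPInstance (n : ℕ) where
  W : ℝ
  r : Fin n → Rect
  W_pos : 0 < W
  w_pos : ∀ i, 0 < (r i).w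
  w_le_W : ∀ i, (r i).w ≤ W
  h_pos : ∀ i, 0 < (r i).h

/-- The open box of rectangle `R` placed at position `p`. -/
def openBox (R : Rect) (p : ℝ × ℝ) : Set (ℝ × ℝ) :=
  Set.Ioo p.1 (p.1 + R.w) ×ˢ Set.Ioo p.2 (p.2 + R.h)

/-- The closed box of rectangle `R` placed at position `p`. -/
def closedBox (R : Rect) (p : ℝ × ℝ) : Set (ℝ × ℝ) :=
  Set.Icc p.1 (p.1 + R.w) ×ˢ Set.Icc p.2 (p.2 + R.h)

namespace SPInstance

variable {n : ℕ}

/-- Rectangle `i` placed at `p` lies inside the strip. -/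
def InStrip (I : SPInstance n) (i : Fin n) (p : ℝ × ℝ) : Prop :=
  0 ≤ p.1 ∧ p.1 + (I.r i).w ≤ I.W ∧ 0 ≤ p.2

/-- `pos` is a feasible packing: each rectangle lies in the strip and the open
boxes are pairwise disjoint. -/
def Feasible (I : SPInstance n) (pos : Fin n → ℝ × ℝ) : Prop :=
  (∀ i, I.InStrip i (pos i)) ∧
    Pairwise (fun i j : Fin n =>
      Disjoint (openBox (I.r i) (pos i)) (openBox (I.r j) (pos j)))

/-- The height of a packing, `max_i (y_i + h_i)`. -/
noncomputable def height (I : SPInstance n) (pos : Fin n → ℝ × ℝ) : ℝ :=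
  ⨆ i, ((pos i).2 + (I.r i).h)

/-- The minimum height of a feasible packing. -/
noncomputable def hOPT (I : SPInstance n) : ℝ :=
  sInf {H | ∃ pos, I.Feasible pos ∧ I.height pos = H}

/-- The maximum height of a rectangle of the instance. -/
noncomputable def hmax (I : SPInstance n) : ℝ :=
  ⨆ i, (I.r i).h

/-- Rectangle `i` can feasibly be placed at `p`, given the rectangles
`j < i` already placed at `pos j`. -/
def FeasibleAt (I : SPInstance n) (pos : Fin n → ℝ × ℝ) (i : Fin n) (p : ℝ × ℝ) : Prop :=
  I.InStrip i p ∧ ∀ j : Fin n, j < i →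
    Disjoint (openBox (I.r i) p) (openBox (I.r j) (pos j))

/-- `pos` is the Bottom-Left packing for the ordering `r 0, r 1, …`: every
rectangle is feasibly placed, at the lexicographically minimal `(y, x)`. -/
def IsBL (I : SPInstance n) (pos : Fin n → ℝ × ℝ) : Prop :=
  ∀ i : Fin n, I.FeasibleAt pos i (pos i) ∧
    ∀ p : ℝ × ℝ, I.FeasibleAt pos i p →
      (pos i).2 < p.2 ∨ ((pos i).2 = p.2 ∧ (pos i).1 ≤ p.1)

/-- Greedy construction of the set `F` of the FQW-partition, processing the
rectangles in the order `σ 0, σ 1, …` and adding a rectangle whenever the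
total width of `F` stays at most `W`. -/
noncomputable def greedyF (I : SPInstance n) (σ : Equiv.Perm (Fin n)) : Finset (Fin n) :=
  (List.finRange n).foldl
    (fun F k =>
      if (I.r (σ k)).w + ∑ f ∈ F, (I.r f).w ≤ I.W then insert (σ k) F else F) ∅

end SPInstance

/-- An FQW-partition datum: a processing order `σ` of the rectangles that is
sorted by decreasing height. -/
structure FQW {n : ℕ} (I : SPInstance n) where
  σ : Equiv.Perm (Fin n)
  sorted : ∀ k k' : Fin n, k ≤ k' → (I.r (σ k')).h ≤ (I.r (σ k)).h

namespace FQW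

variable {n : ℕ} {I : SPInstance n}

/-- The set `F` of the FQW-partition. -/
noncomputable def F (d : FQW I) : Finset (Fin n) := I.greedyF d.σ

/-- The set `𝒲` of the FQW-partition: rectangles not in `F` of width
greater than `W/2`. -/
noncomputable def Wset (d : FQW I) : Finset (Fin n) :=
  Finset.univ.filter fun i => i ∉ d.F ∧ I.W / 2 < (I.r i).w

/-- The set `Q` of the FQW-partition: all remaining rectangles. -/
noncomputable def Q (d : FQW I) : Finset (Fin n) :=
  Finset.univ.filter fun i => i ∉ d.F ∧ ¬ I.W / 2 < (I.r i).w

/-- The rectangles of the instance are listed in the FQW-ordering: first `F`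
sorted by decreasing height, then `Q` sorted by decreasing width, then `𝒲`. -/
def IsOrdered (d : FQW I) : Prop :=
  (∀ i : Fin n, i ∈ d.F ↔ (i : ℕ) < d.F.card) ∧
  (∀ i : Fin n, i ∈ d.Q ↔ d.F.card ≤ (i : ℕ) ∧ (i : ℕ) < d.F.card + d.Q.card) ∧
  (∀ i j : Fin n, (i : ℕ) ≤ (j : ℕ) → (j : ℕ) < d.F.card → (I.r j).h ≤ (I.r i).h) ∧
  (∀ i j : Fin n, d.F.card ≤ (i : ℕ) → (i : ℕ) ≤ (j : ℕ) →
    (j : ℕ) < d.F.card + d.Q.card → (I.r j).w ≤ (I.r i).w)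

end FQW

/-- `max {y_{r_1}, …, y_{r_i}}` (the first `i` rectangles, `0` if `i = 0`):
the lower boundary of the region `H_{i+1}` of the horizontal strip partition. -/
noncomputable def maxYBelow {n : ℕ} (pos : Fin n → ℝ × ℝ) (i : ℕ) : ℝ :=
  ⨆ j : {j : Fin n // (j : ℕ) < i}, (pos (j : Fin n)).2

namespace SPInstance

variable {n : ℕ}

/-- The horizontal line at height `t` is proper: it meets no top or
bottom face of a rectangle. -/
def ProperLine (I : SPInstance n) (pos : Fin n → ℝ × ℝ) (t : ℝ) : Prop :=
  ∀ j : Fin n, t ≠ (pos j).2 ∧ t ≠ (pos j).2 + (I.r j).h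

/-- Rectangle `j` intersects the horizontal line at height `t`. -/
def Intersects (I : SPInstance n) (pos : Fin n → ℝ × ℝ) (j : Fin n) (t : ℝ) : Prop :=
  (pos j).2 < t ∧ t < (pos j).2 + (I.r j).h

/-- The occupied part of the horizontal line at height `t`. -/
noncomputable def occupied (I : SPInstance n) (pos : Fin n → ℝ × ℝ) (t : ℝ) : Set ℝ :=
  ⋃ j ∈ {j : Fin n | I.Intersects pos j t}, Set.Icc (pos j).1 ((pos j).1 + (I.r j).w)

/-- The occupied fraction of the horizontal line at height `t`. -/
noncomputable def occFrac (I : SPInstance n) (pos : Fin n → ℝ × ℝ) (t : ℝ) : ℝ :=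
  (volume (I.occupied pos t)).toReal / I.W

/-- The region `H_{i+1}` (for the `0`-based index `i`) of the horizontal strip
partition: `[0, W] × [max {y_{r_1}, …, y_{r_i}}, y_{r_{i+1}})`. -/
def regionH (I : SPInstance n) (pos : Fin n → ℝ × ℝ) (i : Fin n) : Set (ℝ × ℝ) :=
  Set.Icc 0 I.W ×ˢ Set.Ico (maxYBelow pos (i : ℕ)) (pos i).2

/-- `G` is an unoccupied gap of the horizontal line at height `t`: a maximal
subinterval of `[0, W]` disjoint from the occupied part of the line. -/
def IsGap (I : SPInstance n) (pos : Fin n → ℝ × ℝ) (t : ℝ) (G : Set ℝ) : Prop :=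
  G.Nonempty ∧ G ⊆ Set.Icc 0 I.W ∧ G.OrdConnected ∧ Disjoint G (I.occupied pos t) ∧
    ∀ G' : Set ℝ, G'.OrdConnected → G' ⊆ Set.Icc 0 I.W →
      Disjoint G' (I.occupied pos t) → G ⊆ G' → G' = G

/-- `j` is a left supporter of `i`: it comes before `i` in the ordering, its
right face touches the left face of `i`, and their open `y`-ranges intersect. -/
def IsLeftSupporter (I : SPInstance n) (pos : Fin n → ℝ × ℝ) (i j : Fin n) : Prop :=
  j < i ∧ (pos j).1 + (I.r j).w = (pos i).1 ∧
    (pos j).2 < (pos i).2 + (I.r i).h ∧ (pos i).2 < (pos j).2 + (I.r j).h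

/-- `j` is a bottom supporter of `i`: it comes before `i` in the ordering, its
top face touches the bottom face of `i`, and their open `x`-ranges intersect. -/
def IsBottomSupporter (I : SPInstance n) (pos : Fin n → ℝ × ℝ) (i j : Fin n) : Prop :=
  j < i ∧ (pos j).2 + (I.r j).h = (pos i).2 ∧
    (pos j).1 < (pos i).1 + (I.r i).w ∧ (pos i).1 < (pos j).1 + (I.r j).w

/-- `j` is the leftmost bottom supporter of `i`. -/
def IsLeftmostBottomSupporter (I : SPInstance n) (pos : Fin n → ℝ × ℝ)
    (i j : Fin n) : Prop :=
  I.IsBottomSupporter pos i j ∧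
    ∀ j' : Fin n, I.IsBottomSupporter pos i j' → (pos j).1 ≤ (pos j').1

end SPInstance

/-- `iT` is the top rectangle `r_T` of `Q`: the rectangle of `Q` whose top face
is highest, ties broken by highest bottom face. -/
def IsTopRect {n : ℕ} (I : SPInstance n) (d : FQW I) (pos : Fin n → ℝ × ℝ)
    (iT : Fin n) : Prop :=
  iT ∈ d.Q ∧ ∀ j ∈ d.Q,
    (pos j).2 + (I.r j).h < (pos iT).2 + (I.r iT).h ∨
    ((pos j).2 + (I.r j).h = (pos iT).2 + (I.r iT).h ∧ (pos j).2 ≤ (pos iT).2)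

/-- `iL` is the left rectangle `r_L` of `Q`: the first rectangle of `Q` in the
ordering touching the left strip boundary, and `r_T` if there is none. -/
def IsLeftRect {n : ℕ} (I : SPInstance n) (d : FQW I) (pos : Fin n → ℝ × ℝ)
    (iT iL : Fin n) : Prop :=
  (iL ∈ d.Q ∧ (pos iL).1 = 0 ∧ ∀ j ∈ d.Q, (pos j).1 = 0 → iL ≤ j) ∨
  ((∀ j ∈ d.Q, (pos j).1 ≠ 0) ∧ iL = iT)

/-- The region `H' = [0, W] × ([0, h_{r_T}] ∪ [y_{r_T}, y_{r_T} + h_{r_T}])`. -/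
def Hprime {n : ℕ} (I : SPInstance n) (pos : Fin n → ℝ × ℝ) (iT : Fin n) :
    Set (ℝ × ℝ) :=
  Set.Icc 0 I.W ×ˢ
    (Set.Icc 0 (I.r iT).h ∪ Set.Icc (pos iT).2 ((pos iT).2 + (I.r iT).h))

/-- The type `T(ℓ)` of the proper horizontal line at height `t`: the rectangles
of `Q` intersecting the line whose index is smaller than the least index `j`
with `y_{r_j} > t` (equivalently, all rectangles with index at most theirs have
bottom face at height at most `t`). -/
noncomputable def TypeOf {n : ℕ} (I : SPInstance n) (d : FQW I)
    (pos : Fin n → ℝ × ℝ) (t : ℝ) : Finset (Fin n) :=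
  Finset.univ.filter fun i =>
    i ∈ d.Q ∧ I.Intersects pos i t ∧ ∀ j : Fin n, j ≤ i → (pos j).2 ≤ t

/-- `i` is `LM(ℓ)`: the rectangle of `T(ℓ)` with smallest `x`-coordinate. -/
def IsLM {n : ℕ} (I : SPInstance n) (d : FQW I) (pos : Fin n → ℝ × ℝ) (t : ℝ)
    (i : Fin n) : Prop :=
  i ∈ TypeOf I d pos t ∧ ∀ j ∈ TypeOf I d pos t, (pos i).1 ≤ (pos j).1

/-- The horizontal line at height `t` lies in `H_{a+2} ∪ ⋯ ∪ H_L`, where `iL`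
is the `0`-based index of `r_L` (so `L = iL + 1`, `1`-based). -/
def LineInHUnion {n : ℕ} (I : SPInstance n) (d : FQW I) (pos : Fin n → ℝ × ℝ)
    (iL : Fin n) (t : ℝ) : Prop :=
  ∃ m : Fin n, d.F.card + 1 ≤ (m : ℕ) ∧ m ≤ iL ∧
    maxYBelow pos (m : ℕ) ≤ t ∧ t < (pos m).2

/-- The space `H_{a+2} ∪ ⋯ ∪ H_L`, where `iL` is the `0`-based index of `r_L`. -/
def regionHUnion {n : ℕ} (I : SPInstance n) (d : FQW I) (pos : Fin n → ℝ × ℝ)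
    (iL : Fin n) : Set (ℝ × ℝ) :=
  ⋃ m ∈ {m : Fin n | d.F.card + 1 ≤ (m : ℕ) ∧ m ≤ iL}, I.regionH pos m

/-- The horizontal line at height `t` belongs to `L^k`: it is a proper line of
order `k` lying in `H_{a+2} ∪ ⋯ ∪ H_L`. -/
def InLk {n : ℕ} (I : SPInstance n) (d : FQW I) (pos : Fin n → ℝ × ℝ)
    (iL : Fin n) (k : ℕ) (t : ℝ) : Prop :=
  I.ProperLine pos t ∧ LineInHUnion I d pos iL t ∧ (TypeOf I d pos t).card = k

/-- `i` belongs to `R^k`: it is `LM(ℓ)` for some line `ℓ ∈ L^k`. -/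
def InRk {n : ℕ} (I : SPInstance n) (d : FQW I) (pos : Fin n → ℝ × ℝ)
    (iL : Fin n) (k : ℕ) (i : Fin n) : Prop :=
  ∃ t : ℝ, InLk I d pos iL k t ∧ IsLM I d pos t i

/-- `i` is `LM^k`: the rectangle of `R^k` with smallest `x`-coordinate,
ties broken by largest `y`-coordinate. -/
def IsLMk {n : ℕ} (I : SPInstance n) (d : FQW I) (pos : Fin n → ℝ × ℝ)
    (iL : Fin n) (k : ℕ) (i : Fin n) : Prop :=
  InRk I d pos iL k i ∧ ∀ j : Fin n, InRk I d pos iL k j →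
    (pos i).1 < (pos j).1 ∨ ((pos i).1 = (pos j).1 ∧ (pos j).2 ≤ (pos i).2)

/-- `v = x_F^ℓ` for the line `ℓ` at height `t`: the right face `x + w` of the
rightmost rectangle of `F` intersecting `ℓ`, and `0` if there is none. -/
def IsXF {n : ℕ} (I : SPInstance n) (d : FQW I) (pos : Fin n → ℝ × ℝ)
    (t v : ℝ) : Prop :=
  ((∃ f ∈ d.F, I.Intersects pos f t ∧ v = (pos f).1 + (I.r f).w) ∧
    ∀ f ∈ d.F, I.Intersects pos f t → (pos f).1 + (I.r f).w ≤ v) ∨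
  ((∀ f ∈ d.F, ¬ I.Intersects pos f t) ∧ v = 0)


/-!
The rectangles of `F` have total width at most `W`, so Bottom-Left puts them side by side on
the floor, in order. Hence `r_{a+1}` rests at height `h_{r_B}` on a floor rectangle. If some
`r ∈ Q` were taller than `r_B`, the greedy construction of `F` rejected `r` because of a set
`P ⊆ F` of rectangles at least as tall as `r`, with `w_r + w(P) > W`. As `F` is sorted by
height, the floor rectangles up to the last one of `P` are all taller than `h_{r_B}` and cover
`[0, x]` with `x ≥ w(P)` at the height of `r_{a+1}`. Hence `x_{r_{a+1}} ≥ w(P)`, and since `Q`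
is sorted by decreasing width, `w_r + w(P) ≤ w_{r_{a+1}} + x_{r_{a+1}} ≤ W`.
-/

theorem disjoint_openBox_iff (R R' : Rect) (p p' : ℝ × ℝ) :
    Disjoint (openBox R p) (openBox R' p') ↔
      min (p.1 + R.w) (p'.1 + R'.w) ≤ max p.1 p'.1 ∨
        min (p.2 + R.h) (p'.2 + R'.h) ≤ max p.2 p'.2 := by
  simp only [openBox, Set.disjoint_prod, Set.Ioo_disjoint_Ioo]

theorem exists_le_lt_succ_of_le_of_lt (f : ℕ → ℝ) {x : ℝ} (h0 : f 0 ≤ x) :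
    ∀ {m : ℕ}, x < f m → ∃ j < m, f j ≤ x ∧ x < f (j + 1)
  | 0, hm => absurd h0 (not_le.2 hm)
  | m + 1, hm => by
    by_cases hfm : f m ≤ x
    · exact ⟨m, m.lt_succ_self, hfm, hm⟩
    · obtain ⟨j, hj, hfj⟩ := exists_le_lt_succ_of_le_of_lt f h0 (not_le.1 hfm)
      exact ⟨j, hj.trans m.lt_succ_self, hfj⟩

section Greedy

variable {ι : Type*} [DecidableEq ι] (w : ι → ℝ) (W : ℝ)

noncomputable def greedyStep (A : Finset ι) (x : ι) : Finset ι :=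
  if w x + ∑ f ∈ A, w f ≤ W then insert x A else A

theorem subset_foldl_greedyStep (l : List ι) (A : Finset ι) :
    A ⊆ l.foldl (greedyStep w W) A := by
  induction l generalizing A with
  | nil => exact subset_rfl
  | cons x l ih =>
    refine subset_trans ?_ (ih _)
    unfold greedyStep
    split_ifs
    exacts [Finset.subset_insert _ _, subset_rfl]

theorem sum_foldl_greedyStep_le (l : List ι) {A : Finset ι} (hA : ∑ f ∈ A, w f ≤ W) :
    ∑ f ∈ l.foldl (greedyStep w W) A, w f ≤ W := by
  induction l generalizing A with
  | nil => exact hA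
  | cons x l ih =>
    apply ih
    unfold greedyStep
    split_ifs with hx
    · by_cases hxA : x ∈ A
      · rwa [Finset.insert_eq_self.2 hxA]
      · rwa [Finset.sum_insert hxA]
    · exact hA

theorem mem_of_mem_foldl_greedyStep (l : List ι) {f : ι} (hf : f ∈ l.foldl (greedyStep w W) ∅) :
    f ∈ l := by
  suffices ∀ A : Finset ι, f ∈ l.foldl (greedyStep w W) A → f ∈ A ∨ f ∈ l by
    simpa using this ∅ hf
  clear hf
  induction l with
  | nil => exact fun A hf => Or.inl hf
  | cons x l ih =>
    intro A hf
    rcases ih _ hf with hf | hf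
    · unfold greedyStep at hf
      split_ifs at hf
      · rcases Finset.mem_insert.1 hf with rfl | hf
        exacts [Or.inr List.mem_cons_self, Or.inl hf]
      · exact Or.inl hf
    · exact Or.inr (List.mem_cons_of_mem _ hf)

theorem lt_add_sum_of_notMem_foldl_greedyStep (l₁ l₂ : List ι) {x : ι}
    (hx : x ∉ (l₁ ++ x :: l₂).foldl (greedyStep w W) ∅) :
    W < w x + ∑ f ∈ l₁.foldl (greedyStep w W) ∅, w f := by
  by_contra! hfit
  rw [List.foldl_append, List.foldl_cons] at hx
  refine hx (subset_foldl_greedyStep w W l₂ _ ?_)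
  rw [greedyStep, if_pos hfit]
  exact Finset.mem_insert_self _ _

end Greedy

namespace FQW

variable {n : ℕ} {I : SPInstance n}

theorem F_eq_foldl_greedyStep (d : FQW I) :
    d.F = ((List.finRange n).map d.σ).foldl (greedyStep (fun f => (I.r f).w) I.W) ∅ := by
  rw [List.foldl_map]
  rfl

theorem sum_F_le (d : FQW I) : ∑ f ∈ d.F, (I.r f).w ≤ I.W := by
  rw [F_eq_foldl_greedyStep]
  exact sum_foldl_greedyStep_le _ _ _ (by simpa using I.W_pos.le)

theorem exists_subset_F_of_notMem (d : FQW I) {q : Fin n} (hq : q ∉ d.F) :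
    ∃ P ⊆ d.F, (∀ f ∈ P, (I.r q).h ≤ (I.r f).h) ∧ I.W < (I.r q).w + ∑ f ∈ P, (I.r f).w := by
  obtain ⟨l₁, l₂, hsplit⟩ := List.append_of_mem (List.mem_finRange (d.σ.symm q))
  have hmap : (List.finRange n).map d.σ = l₁.map d.σ ++ q :: l₂.map d.σ := by
    simp [hsplit]
  rw [F_eq_foldl_greedyStep, hmap] at hq ⊢
  refine ⟨_, ?_, fun f hf => ?_, lt_add_sum_of_notMem_foldl_greedyStep _ _ _ _ hq⟩
  · rw [List.foldl_append]
    exact subset_foldl_greedyStep _ _ _ _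
  · obtain ⟨k, hk, rfl⟩ := List.mem_map.1 (mem_of_mem_foldl_greedyStep _ _ _ hf)
    have hsorted := List.pairwise_lt_finRange n
    rw [hsplit, List.pairwise_append] at hsorted
    simpa using d.sorted _ _ (hsorted.2.2 k hk _ List.mem_cons_self).le

end FQW

namespace SPInstance

variable {n : ℕ} (I : SPInstance n)

noncomputable def prefixWidth (m : ℕ) : ℝ :=
  ∑ j ∈ Finset.univ.filter (fun j : Fin n => (j : ℕ) < m), (I.r j).w

theorem prefixWidth_nonneg (m : ℕ) : 0 ≤ I.prefixWidth m :=
  Finset.sum_nonneg fun j _ => (I.w_pos j).le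

@[simp]
theorem prefixWidth_zero : I.prefixWidth 0 = 0 := by
  simp [prefixWidth]

theorem prefixWidth_succ (k : Fin n) :
    I.prefixWidth ((k : ℕ) + 1) = I.prefixWidth k + (I.r k).w := by
  have hfilter : Finset.univ.filter (fun j : Fin n => (j : ℕ) < k + 1) =
      insert k (Finset.univ.filter fun j : Fin n => (j : ℕ) < k) := by
    ext j
    simp [le_iff_eq_or_lt, Fin.val_inj]
  rw [prefixWidth, hfilter, Finset.sum_insert (by simp), add_comm]
  rfl

theorem prefixWidth_mono : Monotone I.prefixWidth := fun _ _ hm =>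
  Finset.sum_le_sum_of_subset_of_nonneg
    (fun j hj => by simp only [Finset.mem_filter, Finset.mem_univ, true_and] at hj ⊢; omega)
    fun j _ _ => (I.w_pos j).le

theorem sum_le_prefixWidth {P : Finset (Fin n)} {m : ℕ} (hP : ∀ f ∈ P, (f : ℕ) < m) :
    ∑ f ∈ P, (I.r f).w ≤ I.prefixWidth m :=
  Finset.sum_le_sum_of_subset_of_nonneg (fun f hf => by simpa using hP f hf)
    fun j _ _ => (I.w_pos j).le

/-- Otherwise `p.1` falls into the floor slot of some `j < m`, and the two boxes overlap. -/
theorem prefixWidth_le_of_disjoint_floor {pos : Fin n → ℝ × ℝ} {m : ℕ} (hm : m ≤ n)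
    (hfloor : ∀ j : Fin n, (j : ℕ) < m → pos j = (I.prefixWidth j, 0))
    (k : Fin n) {p : ℝ × ℝ} (hx : 0 ≤ p.1) (hy : 0 ≤ p.2)
    (hlow : ∀ j : Fin n, (j : ℕ) < m → p.2 < (I.r j).h)
    (hdisj : ∀ j : Fin n, (j : ℕ) < m → Disjoint (openBox (I.r k) p) (openBox (I.r j) (pos j))) :
    I.prefixWidth m ≤ p.1 := by
  by_contra! hlt
  obtain ⟨j, hjm, hjx, hxj⟩ :=
    exists_le_lt_succ_of_le_of_lt I.prefixWidth (by simpa using hx) hlt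
  let jF : Fin n := ⟨j, by omega⟩
  have hxj : p.1 < I.prefixWidth j + (I.r jF).w := I.prefixWidth_succ jF ▸ hxj
  have hsep := (disjoint_openBox_iff _ _ _ _).1 (hfloor jF hjm ▸ hdisj jF hjm)
  simp only [min_le_iff, le_max_iff, zero_add] at hsep
  have := I.w_pos k
  have := I.h_pos k
  have := hlow jF hjm
  rcases hsep with ((h | h) | (h | h)) | ((h | h) | (h | h)) <;> linarith

variable {I} in
theorem IsBL.pos_eq_prefixWidth {pos : Fin n → ℝ × ℝ} (hBL : I.IsBL pos) {a : ℕ}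
    (ha : I.prefixWidth a ≤ I.W) (k : Fin n) (hk : (k : ℕ) < a) :
    pos k = (I.prefixWidth k, 0) := by
  induction k using WellFoundedLT.induction with
  | _ k ih =>
    have hprev : ∀ j : Fin n, j < k → pos j = (I.prefixWidth j, 0) :=
      fun j hj => ih j hj (by rw [Fin.lt_def] at hj; omega)
    have hfeas : I.FeasibleAt pos k (I.prefixWidth k, 0) := by
      refine ⟨⟨I.prefixWidth_nonneg k, ?_, le_rfl⟩, fun j hj => ?_⟩
      · rw [← prefixWidth_succ]
        exact (I.prefixWidth_mono (by omega)).trans ha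
      · rw [hprev j hj, disjoint_openBox_iff]
        refine Or.inl (min_le_of_right_le (le_max_of_le_left ?_))
        rw [← prefixWidth_succ]
        exact I.prefixWidth_mono hj
    obtain ⟨hfeask, hmin⟩ := hBL k
    have hbl : (pos k).2 = 0 ∧ (pos k).1 ≤ I.prefixWidth k := by
      rcases hmin _ hfeas with hy | hbl
      · exact absurd hfeask.1.2.2 (not_le.2 hy)
      · exact hbl
    have hx : I.prefixWidth k ≤ (pos k).1 :=
      I.prefixWidth_le_of_disjoint_floor k.isLt.le hprev k hfeask.1.1 hfeask.1.2.2
        (fun j _ => hbl.1 ▸ I.h_pos j) hfeask.2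
    exact Prod.ext (le_antisymm hbl.2 hx) hbl.1

end SPInstance

namespace FQW

variable {n : ℕ} {I : SPInstance n} (d : FQW I)

theorem prefixWidth_card_F (hF : ∀ i : Fin n, i ∈ d.F ↔ (i : ℕ) < d.F.card) :
    I.prefixWidth d.F.card = ∑ f ∈ d.F, (I.r f).w :=
  Finset.sum_congr (by ext f; simp [hF]) fun _ _ => rfl

theorem exists_prefix_taller_of_subset_F (hF : ∀ i : Fin n, i ∈ d.F ↔ (i : ℕ) < d.F.card)
    (hFh : ∀ i j : Fin n, (i : ℕ) ≤ (j : ℕ) → (j : ℕ) < d.F.card → (I.r j).h ≤ (I.r i).h)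
    {P : Finset (Fin n)} (hP : P ⊆ d.F) {h : ℝ} (hPh : ∀ f ∈ P, h < (I.r f).h) :
    ∃ m ≤ d.F.card, ∑ f ∈ P, (I.r f).w ≤ I.prefixWidth m ∧
      ∀ j : Fin n, (j : ℕ) < m → h < (I.r j).h := by
  refine ⟨P.sup fun f => (f : ℕ) + 1, Finset.sup_le fun f hf => (hF f).1 (hP hf),
    I.sum_le_prefixWidth fun f hf => Finset.le_sup (f := fun f : Fin n => (f : ℕ) + 1) hf,
    fun j hj => ?_⟩
  obtain ⟨f, hf, hjf⟩ := Finset.lt_sup_iff.1 hj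
  exact (hPh f hf).trans_le (hFh j f (by omega) ((hF f).1 (hP hf)))

end FQW

theorem Q_height_le_bottom_supporter_general {n : ℕ} (I : SPInstance n) (d : FQW I)
    (hord : d.IsOrdered) (pos : Fin n → ℝ × ℝ) (hBL : I.IsBL pos)
    (ia : Fin n) (hia : (ia : ℕ) = d.F.card)
    (iB : Fin n) (hiB : I.IsLeftmostBottomSupporter pos ia iB)
    (i : Fin n) (hi : i ∈ d.Q) :
    (I.r i).h ≤ (I.r iB).h := by
  obtain ⟨hF, hQ, hFh, hQw⟩ := hord
  have hfloor : ∀ j : Fin n, (j : ℕ) < d.F.card → pos j = (I.prefixWidth j, 0) :=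
    hBL.pos_eq_prefixWidth ((d.prefixWidth_card_F hF).trans_le d.sum_F_le)
  obtain ⟨⟨hBia, hBtop, -, -⟩, -⟩ := hiB
  have hyia : (pos ia).2 = (I.r iB).h := by
    rw [← hBtop, hfloor iB (by rw [← hia]; exact hBia), zero_add]
  by_contra! htall
  obtain ⟨P, hPF, hPh, hPW⟩ := d.exists_subset_F_of_notMem (Finset.mem_filter.1 hi).2.1
  obtain ⟨m, hma, hPm, hmtall⟩ :=
    d.exists_prefix_taller_of_subset_F hF hFh hPF fun f hf => htall.trans_le (hPh f hf)
  obtain ⟨⟨hx0, hxW, hy0⟩, hdisj⟩ := (hBL ia).1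
  have hxia : I.prefixWidth m ≤ (pos ia).1 :=
    I.prefixWidth_le_of_disjoint_floor (by omega) (fun j hj => hfloor j (by omega)) ia hx0 hy0
      (fun j hj => hyia ▸ hmtall j hj) fun j hj => hdisj j (by rw [Fin.lt_def]; omega)
  obtain ⟨hai, hiQ⟩ := (hQ i).1 hi
  have hwi : (I.r i).w ≤ (I.r ia).w := hQw ia i hia.ge (hia ▸ hai) hiQ
  linarith

/-- **Lemma.** Every rectangle of `Q` has height at most `h_{r_B}`, where
`r_B` is the leftmost bottom supporter of the first rectangle of `Q`
(0-based index `ia` with `(ia : ℕ) = |F| = a`). -/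
theorem Q_height_le_bottom_supporter {n : ℕ} (I : SPInstance n) (d : FQW I)
    (hord : d.IsOrdered) (pos : Fin n → ℝ × ℝ) (hBL : I.IsBL pos)
    (hQ : d.Q.Nonempty) (ia : Fin n) (hia : (ia : ℕ) = d.F.card)
    (iB : Fin n) (hiB : I.IsLeftmostBottomSupporter pos ia iB)
    (i : Fin n) (hi : i ∈ d.Q) :
    (I.r i).h ≤ (I.r iB).h :=
  Q_height_le_bottom_supporter_general I d hord pos hBL ia hia iB hiB i hi
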